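/- arXiv:2203.01420 — 8 statements merged into one kernel-verified Lean document; each statement's English description precedes it below -/
import Mathlib

section
/- Let S be a finite set of scenarios and D a finite set of decisions with cost functions C_i : D → ℝ for each i ∈ S. Suppose there exists a decision y ∈ D and a scenario k ∈ S such that C_k(y) < C_k(x) for all x ∈ D with x ≠ y. Then one can extend D by a new decision z with costs C_i(z) (i ∈ S) chosen so that y is the unique minimizer of the maximum regret over the extended decision set D ∪ {z}, where the regret of x in scenario i is R_i(x) = C_i(x) − min_{w ∈ D ∪ {z}} C_i(w). -/
open Finset

lemma option_inf'_eq {D : Type*} [Fintype D] [Nonempty D] (f : Option D → ℝ) :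
    Finset.univ.inf' Finset.univ_nonempty f =
      min (f none) (Finset.univ.inf' Finset.univ_nonempty (fun d : D => f (some d))) := by
  apply le_antisymm
  · apply le_min
    · exact inf'_le _ (mem_univ none)
    · exact le_inf' _ _ (fun d _ => inf'_le _ (mem_univ (some d)))
  · apply le_inf'
    intro w _
    cases w with
    | none => exact min_le_left _ _
    | some d => exact (min_le_right _ _).trans (inf'_le _ (mem_univ d))

/-- Lemma 1: a new decision `z` (with costs `Cz`) can be added so that `y` becomes the
unique minimax-regret choice over the extended decision set `D ∪ {z}` (modelled as `Option D`,
with `none` playing the role of `z`). -/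
theorem stmt0 {S D : Type*} [Fintype S] [Fintype D] [Nonempty S] [Nonempty D]
    (C : S → D → ℝ) (y : D) (k : S)
    (h : ∀ x : D, x ≠ y → C k y < C k x) :
    ∃ Cz : S → ℝ,
      ∀ x : Option D, x ≠ some y →
        (Finset.univ.sup' Finset.univ_nonempty
            (fun i : S =>
              (Option.elim (some y) (Cz i) (C i)) -
                Finset.univ.inf' Finset.univ_nonempty
                  (fun w : Option D => Option.elim w (Cz i) (C i)))) <
        (Finset.univ.sup' Finset.univ_nonempty
            (fun i : S =>
              (Option.elim x (Cz i) (C i)) -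
                Finset.univ.inf' Finset.univ_nonempty
                  (fun w : Option D => Option.elim w (Cz i) (C i)))) := by
  classical
  have hmk : (Finset.univ.inf' Finset.univ_nonempty fun d : D => C k d) = C k y := by
    apply le_antisymm (inf'_le _ (mem_univ y))
    apply le_inf'
    intro d _
    by_cases hd : d = y
    · subst hd; exact le_rfl
    · exact (h d hd).le
  by_cases hS : ∀ i : S, i = k
  · -- single-scenario case: give z a cost strictly above C k y
    refine ⟨fun i => C i y + 1, ?_⟩
    intro x hx
    have hinf : ∀ i : S,
        (Finset.univ.inf' Finset.univ_nonempty
          (fun w : Option D => Option.elim w (C i y + 1) (C i))) = C i y := by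
      intro i
      rw [option_inf'_eq]
      simp only [Option.elim_none, Option.elim_some]
      rw [hS i, hmk]
      exact min_eq_right (by linarith)
    rw [Finset.sup'_lt_iff]
    intro i _
    simp only [Option.elim_some]
    rw [hinf i]
    cases x with
    | none =>
        refine lt_of_lt_of_le ?_ (Finset.le_sup' (f := fun i : S =>
            (Option.elim (none : Option D) (C i y + 1) (C i)) -
              Finset.univ.inf' Finset.univ_nonempty
                (fun w : Option D => Option.elim w (C i y + 1) (C i))) (mem_univ k))
        rw [hinf k]
        simp only [Option.elim_none]
        linarith
    | some x' =>
        have hxy : x' ≠ y := fun hh => hx (by rw [hh])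
        refine lt_of_lt_of_le ?_ (Finset.le_sup' (f := fun i : S =>
            (Option.elim (some x') (C i y + 1) (C i)) -
              Finset.univ.inf' Finset.univ_nonempty
                (fun w : Option D => Option.elim w (C i y + 1) (C i))) (mem_univ k))
        rw [hinf k]
        simp only [Option.elim_some]
        have := h x' hxy
        linarith
  · -- there is another scenario j ≠ k
    push_neg at hS
    obtain ⟨j, hj⟩ := hS
    set m : S → ℝ := fun i => Finset.univ.inf' Finset.univ_nonempty (fun d : D => C i d)
      with hm
    have hmdef : ∀ i : S,
        (Finset.univ.inf' Finset.univ_nonempty fun d : D => C i d) = m i := fun i => rfl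
    have hmk' : m k = C k y := hmk
    set A : ℝ := Finset.univ.sup' Finset.univ_nonempty (fun i : S => C i y - m i) with hA
    set L : ℝ := Finset.univ.sup' Finset.univ_nonempty m with hL
    set t : ℝ := A + 1 with ht
    set M : ℝ := t + L + 1 with hM
    have hA0 : (0 : ℝ) ≤ A := by
      have := Finset.le_sup' (f := fun i : S => C i y - m i) (mem_univ k)
      rw [hmk'] at this; linarith
    have hAi : ∀ i : S, C i y - m i ≤ A :=
      fun i => Finset.le_sup' (f := fun i : S => C i y - m i) (mem_univ i)
    have hLi : ∀ i : S, m i ≤ L := fun i => Finset.le_sup' m (mem_univ i)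
    set Cz : S → ℝ := fun i => if i = k then C k y - t else M with hCz
    refine ⟨Cz, ?_⟩
    have hinfk :
        (Finset.univ.inf' Finset.univ_nonempty
          (fun w : Option D => Option.elim w (Cz k) (C k))) = C k y - t := by
      rw [option_inf'_eq]
      simp only [Option.elim_none, Option.elim_some]
      rw [hmdef k, hmk']
      have hk : Cz k = C k y - t := by simp [hCz]
      rw [hk]
      exact min_eq_left (by linarith)
    have hinfi : ∀ i : S, i ≠ k →
        (Finset.univ.inf' Finset.univ_nonempty
          (fun w : Option D => Option.elim w (Cz i) (C i))) = m i := by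
      intro i hik
      rw [option_inf'_eq]
      simp only [Option.elim_none, Option.elim_some]
      rw [hmdef i]
      have hk : Cz i = M := by simp [hCz, if_neg hik]
      rw [hk]
      have := hLi i
      exact min_eq_right (by linarith)
    intro x hx
    rw [Finset.sup'_lt_iff]
    intro i _
    simp only [Option.elim_some]
    have hyi : C i y -
        (Finset.univ.inf' Finset.univ_nonempty
          (fun w : Option D => Option.elim w (Cz i) (C i))) ≤ t := by
      by_cases hik : i = k
      · subst hik; rw [hinfk]; linarith
      · rw [hinfi i hik]; have := hAi i; linarith
    have hbig : t <
        Finset.univ.sup' Finset.univ_nonempty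
          (fun i : S =>
            (Option.elim x (Cz i) (C i)) -
              Finset.univ.inf' Finset.univ_nonempty
                (fun w : Option D => Option.elim w (Cz i) (C i))) := by
      cases x with
      | none =>
          refine lt_of_lt_of_le ?_ (Finset.le_sup' (f := fun i : S =>
            (Option.elim (none : Option D) (Cz i) (C i)) -
              Finset.univ.inf' Finset.univ_nonempty
                (fun w : Option D => Option.elim w (Cz i) (C i))) (mem_univ j))
          rw [hinfi j hj]
          simp only [Option.elim_none]
          have h1 : Cz j = M := by simp [hCz, if_neg hj]
          rw [h1]
          have := hLi j
          linarith
      | some x' =>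
          have hxy : x' ≠ y := fun hh => hx (by rw [hh])
          refine lt_of_lt_of_le ?_ (Finset.le_sup' (f := fun i : S =>
            (Option.elim (some x') (Cz i) (C i)) -
              Finset.univ.inf' Finset.univ_nonempty
                (fun w : Option D => Option.elim w (Cz i) (C i))) (mem_univ k))
          rw [hinfk]
          simp only [Option.elim_some]
          have := h x' hxy
          linarith
    calc C i y - _ ≤ t := hyi
      _ < _ := hbig
end

section
/- Under the hypotheses of the previous statement (f* continuous, nondecreasing, and translation-equivariant in preference order), the set L = {x ∈ ℝ^s : f*(R + x) = f*(R), R + x ≥ 0} for a fixed interior regret vector R is the intersection of a linear subspace of dimension s − 1 with the translates allowed, i.e., there is a nonzero vector p such that f*(R) = f*(R') whenever R, R' ∈ ℝ₊^s satisfy pᵀR = pᵀR'. -/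
/-!
Unless `f` is constant on the orthant, its diagonal `t ↦ f (t, …, t)` is strictly increasing:
if it took the same value at `a < b`, translating by `-a` and then repeatedly by `b - a` would
force `f` to be constant. By continuity every `R ≥ 0` then has a unique diagonal representative
`u R` with `f R = f (u R, …, u R)`. Translation invariance of indifference makes `u` additive on
the orthant, and `u` is monotone, so `u R = ∑ pᵢ Rᵢ`; moreover `∑ pᵢ = u (1, …, 1) = 1`.
-/

open Set Function

theorem apply_eq_mul_apply_one_of_add_of_monotoneOn {φ : ℝ → ℝ}
    (hadd : ∀ a b, 0 ≤ a → 0 ≤ b → φ (a + b) = φ a + φ b) (hmono : MonotoneOn φ (Ici 0))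
    {c : ℝ} (hc : 0 ≤ c) : φ c = c * φ 1 := by
  have hnsmul : ∀ (n : ℕ) {x : ℝ}, 0 ≤ x → φ (n * x) = n * φ x := by
    intro n x hx
    induction n with
    | zero => simpa using hadd 0 0 le_rfl le_rfl
    | succ n ih =>
      push_cast
      rw [add_mul, one_mul, hadd _ _ (by positivity) hx, ih]
      ring
  have hnat : ∀ k : ℕ, φ k = k * φ 1 := fun k => by simpa using hnsmul k zero_le_one
  have hφ0 : φ 0 = 0 := by simpa using hnat 0
  have hφ1 : 0 ≤ φ 1 := by
    simpa [hφ0] using hmono self_mem_Ici (mem_Ici.mpr zero_le_one) zero_le_one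
  -- Squeezing `n * c` between consecutive integers gives `n * |φ c - c * φ 1| ≤ φ 1`.
  have hbound : ∀ n : ℕ, n * |φ c - c * φ 1| ≤ φ 1 := by
    intro n
    set k := ⌊n * c⌋₊
    have hk : (k : ℝ) ≤ n * c := Nat.floor_le (by positivity)
    have hk' : n * c ≤ (k + 1 : ℕ) := by push_cast; exact (Nat.lt_floor_add_one _).le
    have hlo : k * φ 1 ≤ n * φ c := by
      rw [← hnat, ← hnsmul n hc]
      exact hmono (mem_Ici.mpr k.cast_nonneg) (mem_Ici.mpr (by positivity)) hk
    have hhi : n * φ c ≤ (k + 1 : ℕ) * φ 1 := by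
      rw [← hnat, ← hnsmul n hc]
      exact hmono (mem_Ici.mpr (by positivity)) (mem_Ici.mpr (Nat.cast_nonneg _)) hk'
    push_cast at hk' hhi
    rw [← abs_of_nonneg (Nat.cast_nonneg (α := ℝ) n), ← abs_mul, abs_le]
    constructor <;> nlinarith
  by_contra hne
  have hpos : 0 < |φ c - c * φ 1| := abs_pos.mpr (sub_ne_zero.mpr hne)
  obtain ⟨n, hn⟩ := exists_nat_gt (φ 1 / |φ c - c * φ 1|)
  rw [div_lt_iff₀ hpos] at hn
  linarith [hbound n]

theorem map_sum_of_add_of_nonneg {E M ι : Type*} [AddCommMonoid E] [PartialOrder E]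
    [IsOrderedAddMonoid E] [AddCancelCommMonoid M] {u : E → M}
    (hadd : ∀ x y, 0 ≤ x → 0 ≤ y → u (x + y) = u x + u y) (s : Finset ι) {v : ι → E}
    (hv : ∀ i ∈ s, 0 ≤ v i) : u (∑ i ∈ s, v i) = ∑ i ∈ s, u (v i) := by
  induction s using Finset.cons_induction with
  | empty => simpa using hadd 0 0 le_rfl le_rfl
  | cons i s hi ih =>
    have hvs : ∀ j ∈ s, 0 ≤ v j := fun j hj => hv j (Finset.mem_cons_of_mem hj)
    rw [Finset.sum_cons, Finset.sum_cons, hadd _ _ (hv i (Finset.mem_cons_self i s))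
      (Finset.sum_nonneg hvs), ih hvs]

theorem eq_sum_mul_of_add_of_monotoneOn {ι : Type*} [Fintype ι] [DecidableEq ι]
    {u : (ι → ℝ) → ℝ} (hadd : ∀ R R', 0 ≤ R → 0 ≤ R' → u (R + R') = u R + u R')
    (hmono : MonotoneOn u (Ici 0)) {R : ι → ℝ} (hR : 0 ≤ R) :
    u R = ∑ i, u (Pi.single i 1) * R i := by
  have hsingle : ∀ i, u (Pi.single i (R i)) = u (Pi.single i 1) * R i := fun i => by
    rw [mul_comm]
    refine apply_eq_mul_apply_one_of_add_of_monotoneOn (φ := fun c => u (Pi.single i c))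
      (fun a b ha hb => ?_) (fun a ha b hb hab => ?_) (hR i)
    · simp only [Pi.single_add]
      exact hadd _ _ (Pi.single_nonneg.mpr ha) (Pi.single_nonneg.mpr hb)
    · exact hmono (Pi.single_nonneg.mpr ha) (Pi.single_nonneg.mpr hb) (Pi.single_mono i hab)
  calc u R = u (∑ i, Pi.single i (R i)) := by rw [Finset.univ_sum_single]
    _ = ∑ i, u (Pi.single i (R i)) :=
      map_sum_of_add_of_nonneg hadd _ fun i _ => Pi.single_nonneg.mpr (hR i)
    _ = ∑ i, u (Pi.single i 1) * R i := Finset.sum_congr rfl fun i _ => hsingle i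

section Orthant

variable {ι : Type*}

def IndifferenceTranslationInvariant (f : (ι → ℝ) → ℝ) : Prop :=
  ∀ R R' a : ι → ℝ, 0 ≤ R → 0 ≤ R' → 0 ≤ R + a → 0 ≤ R' + a → f R = f R' →
    f (R + a) = f (R' + a)

variable {f : (ι → ℝ) → ℝ}

theorem le_const_sum [Fintype ι] {R : ι → ℝ} (hR : 0 ≤ R) : R ≤ const ι (∑ i, R i) :=
  fun i => Finset.single_le_sum (fun j _ => hR j) (Finset.mem_univ i)

theorem apply_const_nat_mul_eq (hshift : IndifferenceTranslationInvariant f) {d : ℝ} (hd : 0 ≤ d)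
    (h : f (const ι d) = f 0) (n : ℕ) : f (const ι (n * d)) = f 0 := by
  induction n with
  | zero => simp
  | succ n ih =>
    have hnd : 0 ≤ (n : ℝ) * d := by positivity
    have := hshift (const ι d) 0 (const ι (n * d)) (fun _ => hd) le_rfl
      (fun _ => add_nonneg hd hnd) (fun _ => by simpa using hnd) h
    rw [const_add, zero_add, ih] at this
    rw [← this]
    congr 1
    ext
    simp only [const_apply, Nat.cast_succ]
    ring

theorem eq_apply_zero_of_apply_const_eq [Fintype ι] (hmono : MonotoneOn f (Ici 0))
    (hshift : IndifferenceTranslationInvariant f)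
    {d : ℝ} (hd : 0 < d) (h : f (const ι d) = f 0) {R : ι → ℝ} (hR : 0 ≤ R) : f R = f 0 := by
  obtain ⟨n, hn⟩ := exists_nat_ge ((∑ i, R i) / d)
  rw [div_le_iff₀ hd] at hn
  have hsum : 0 ≤ ∑ i, R i := Finset.sum_nonneg fun i _ => hR i
  refine le_antisymm ?_ (hmono self_mem_Ici hR hR)
  calc f R ≤ f (const ι (∑ i, R i)) := hmono hR (fun _ => hsum) (le_const_sum hR)
    _ ≤ f (const ι (n * d)) :=
      hmono (fun _ => hsum) (fun _ => mul_nonneg n.cast_nonneg hd.le) fun _ => hn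
    _ = f 0 := apply_const_nat_mul_eq hshift hd.le h n

theorem strictMonoOn_apply_const [Fintype ι] (hmono : MonotoneOn f (Ici 0))
    (hshift : IndifferenceTranslationInvariant f) (hnc : ∃ R, 0 ≤ R ∧ f R ≠ f 0) :
    StrictMonoOn (fun t => f (const ι t)) (Ici 0) := by
  intro a ha b hb hab
  refine lt_of_le_of_ne (hmono (fun _ => ha) (fun _ => hb) fun _ => hab.le) fun hfab => ?_
  have hshifted := hshift (const ι a) (const ι b) (const ι (-a)) (fun _ => ha) (fun _ => hb)
    (fun _ => by simp) (fun _ => by simpa using hab.le) hfab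
  rw [const_add, const_add, add_neg_cancel, ← sub_eq_add_neg] at hshifted
  obtain ⟨R, hR, hne⟩ := hnc
  exact hne (eq_apply_zero_of_apply_const_eq hmono hshift (sub_pos.mpr hab) hshifted.symm hR)

theorem exists_apply_const_eq [Fintype ι] (hcont : ContinuousOn f (Ici 0))
    (hmono : MonotoneOn f (Ici 0))
    {R : ι → ℝ} (hR : 0 ≤ R) : ∃ t, 0 ≤ t ∧ f (const ι t) = f R := by
  have hsum : 0 ≤ ∑ i, R i := Finset.sum_nonneg fun i _ => hR i
  have hdiag : ContinuousOn (fun t => f (const ι t)) (Icc 0 (∑ i, R i)) :=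
    hcont.comp (continuous_pi fun _ => continuous_id).continuousOn fun t ht _ => ht.1
  obtain ⟨t, ht, hft⟩ := intermediate_value_Icc hsum hdiag
    ⟨hmono self_mem_Ici hR hR, hmono hR (fun _ => hsum) (le_const_sum hR)⟩
  exact ⟨t, ht.1, hft⟩

theorem representative_add {u : (ι → ℝ) → ℝ} (hu0 : ∀ R, 0 ≤ R → 0 ≤ u R)
    (hu : ∀ R, 0 ≤ R → f (const ι (u R)) = f R) (hshift : IndifferenceTranslationInvariant f)
    (hstrict : StrictMonoOn (fun t => f (const ι t)) (Ici 0)) {R R' : ι → ℝ} (hR : 0 ≤ R)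
    (hR' : 0 ≤ R') : u (R + R') = u R + u R' := by
  have hRR' : 0 ≤ R + R' := add_nonneg hR hR'
  refine hstrict.injOn (hu0 _ hRR') (add_nonneg (hu0 R hR) (hu0 R' hR')) ?_
  calc f (const ι (u (R + R'))) = f (R + R') := hu _ hRR'
    _ = f (const ι (u R) + R') :=
      hshift _ _ R' hR (fun _ => hu0 R hR) hRR' (add_nonneg (fun _ => hu0 R hR) hR')
        (hu R hR).symm
    _ = f (R' + const ι (u R)) := by rw [add_comm]
    _ = f (const ι (u R') + const ι (u R)) :=
      hshift _ _ _ hR' (fun _ => hu0 R' hR') (add_nonneg hR' fun _ => hu0 R hR)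
        (fun _ => add_nonneg (hu0 R' hR') (hu0 R hR)) (hu R' hR').symm
    _ = f (const ι (u R + u R')) := by rw [const_add, add_comm (u R')]

theorem representative_monotoneOn {u : (ι → ℝ) → ℝ} (hu0 : ∀ R, 0 ≤ R → 0 ≤ u R)
    (hu : ∀ R, 0 ≤ R → f (const ι (u R)) = f R) (hmono : MonotoneOn f (Ici 0))
    (hstrict : StrictMonoOn (fun t => f (const ι t)) (Ici 0)) : MonotoneOn u (Ici 0) := by
  intro R hR R' hR' hle
  rw [← hstrict.le_iff_le (hu0 R hR) (hu0 R' hR')]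
  simpa only [hu R hR, hu R' hR'] using hmono hR hR' hle

theorem exists_sum_eq_one_forall_eq_apply_const [Fintype ι] [Nonempty ι] [DecidableEq ι]
    (hcont : ContinuousOn f (Ici 0)) (hmono : MonotoneOn f (Ici 0))
    (hshift : IndifferenceTranslationInvariant f) :
    ∃ p : ι → ℝ, ∑ i, p i = 1 ∧ ∀ R, 0 ≤ R → f R = f (const ι (∑ i, p i * R i)) := by
  by_cases hconst : ∀ R, 0 ≤ R → f R = f 0
  · obtain ⟨i₀⟩ := ‹Nonempty ι›
    refine ⟨Pi.single i₀ 1, by simp, fun R hR => ?_⟩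
    rw [hconst R hR, hconst (const ι _) fun _ => by simpa [Pi.single_apply] using hR i₀]
  push Not at hconst
  have hstrict := strictMonoOn_apply_const hmono hshift hconst
  choose! u hu0 hu using fun R (hR : 0 ≤ R) => exists_apply_const_eq hcont hmono hR
  have hlin : ∀ R, 0 ≤ R → u R = ∑ i, u (Pi.single i 1) * R i := fun R =>
    eq_sum_mul_of_add_of_monotoneOn (fun R R' => representative_add hu0 hu hshift hstrict)
      (representative_monotoneOn hu0 hu hmono hstrict)
  have hone : u (const ι 1) = 1 :=
    hstrict.injOn (hu0 _ fun _ => zero_le_one) (mem_Ici.mpr zero_le_one)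
      (hu _ fun _ => zero_le_one)
  refine ⟨fun i => u (Pi.single i 1), ?_, fun R hR => by rw [← hlin R hR, hu R hR]⟩
  have hsum := hlin (const ι 1) fun _ => zero_le_one
  rw [hone] at hsum
  simpa using hsum.symm

end Orthant

theorem stmt2_general {s : ℕ} (hs : 1 ≤ s) (f : (Fin s → ℝ) → ℝ)
    (hcont : ContinuousOn f {R : Fin s → ℝ | ∀ i, 0 ≤ R i})
    (hmono : ∀ R R' : Fin s → ℝ, (∀ i, 0 ≤ R i) → (∀ i, 0 ≤ R' i) →
      (∀ i, R i ≤ R' i) → f R ≤ f R')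
    (hIIAeq : ∀ R R' a : Fin s → ℝ, (∀ i, 0 ≤ R i) → (∀ i, 0 ≤ R' i) →
      (∀ i, 0 ≤ R i + a i) → (∀ i, 0 ≤ R' i + a i) →
      f R = f R' → f (R + a) = f (R' + a)) :
    ∃ p : Fin s → ℝ, p ≠ 0 ∧
      ∀ R R' : Fin s → ℝ, (∀ i, 0 ≤ R i) → (∀ i, 0 ≤ R' i) →
        (∑ i, p i * R i = ∑ i, p i * R' i) → f R = f R' := by
  have : Nonempty (Fin s) := ⟨⟨0, hs⟩⟩
  obtain ⟨p, hp, hf⟩ := exists_sum_eq_one_forall_eq_apply_const hcont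
    (fun R hR R' hR' hle => hmono R R' hR hR' hle) hIIAeq
  refine ⟨p, fun h => by simp [h] at hp, fun R R' hR hR' hpR => ?_⟩
  rw [hf R hR, hf R' hR', hpR]

/-- Level-set structure step: under continuity, monotonicity and translation-equivariance of
both strict preference and indifference, the level sets of `f` on the nonnegative orthant are
cut out by a single nonzero linear functional `p`. -/
theorem stmt2 {s : ℕ} (hs : 1 ≤ s) (f : (Fin s → ℝ) → ℝ)
    (hcont : ContinuousOn f {R : Fin s → ℝ | ∀ i, 0 ≤ R i})
    (hmono : ∀ R R' : Fin s → ℝ, (∀ i, 0 ≤ R i) → (∀ i, 0 ≤ R' i) →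
      (∀ i, R i ≤ R' i) → f R ≤ f R')
    (hIIAlt : ∀ R R' a : Fin s → ℝ, (∀ i, 0 ≤ R i) → (∀ i, 0 ≤ R' i) →
      (∀ i, 0 ≤ R i + a i) → (∀ i, 0 ≤ R' i + a i) →
      f R' < f R → f (R' + a) < f (R + a))
    (hIIAeq : ∀ R R' a : Fin s → ℝ, (∀ i, 0 ≤ R i) → (∀ i, 0 ≤ R' i) →
      (∀ i, 0 ≤ R i + a i) → (∀ i, 0 ≤ R' i + a i) →
      f R = f R' → f (R + a) = f (R' + a)) :
    ∃ p : Fin s → ℝ, p ≠ 0 ∧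
      ∀ R R' : Fin s → ℝ, (∀ i, 0 ≤ R i) → (∀ i, 0 ≤ R' i) →
        (∑ i, p i * R i = ∑ i, p i * R' i) → f R = f R' :=
  stmt2_general hs f hcont hmono hIIAeq
end

section
/- (Rational scaling of invariance directions.) Let f* : ℝ₊^s → ℝ be continuous and satisfy: f*(R) > f*(R') ⟹ f*(R+a) > f*(R'+a) and f*(R) = f*(R') ⟹ f*(R+a) = f*(R'+a), whenever all vectors involved are nonnegative. If f*(R) = f*(R + a) for some R ≥ 0 and R + a ≥ 0, then f*(R) = f*(R + q·a) for every rational q ≥ 0 such that R + q·a ≥ 0. -/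
private lemma chain_lt' (g : ℕ → ℝ) : ∀ n : ℕ, (∀ k, k + 1 ≤ n → g k < g (k+1)) →
    1 ≤ n → g 0 < g n := by
  intro n
  induction n with
  | zero => intro _ h; omega
  | succ n ih =>
    intro h _
    rcases Nat.eq_zero_or_pos n with h0 | h0
    · subst h0; exact h 0 le_rfl
    · exact lt_trans (ih (fun k hk => h k (by omega)) h0) (h n le_rfl)

private lemma chain_eq' (g : ℕ → ℝ) (n : ℕ) (h : ∀ k, k + 1 ≤ n → g k = g (k+1)) :
    ∀ k, k ≤ n → g 0 = g k := by
  intro k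
  induction k with
  | zero => intro _; rfl
  | succ k ih => intro hk; exact (ih (by omega)).trans (h k hk)

/-- Rational scaling of invariance directions: if `f R = f (R + a)`, then
`f R = f (R + q • a)` for every rational `q ≥ 0` keeping the vector nonnegative. -/
theorem stmt3 {s : ℕ} (f : (Fin s → ℝ) → ℝ)
    (hcont : ContinuousOn f {R : Fin s → ℝ | ∀ i, 0 ≤ R i})
    (hIIAlt : ∀ R R' a : Fin s → ℝ, (∀ i, 0 ≤ R i) → (∀ i, 0 ≤ R' i) →
      (∀ i, 0 ≤ R i + a i) → (∀ i, 0 ≤ R' i + a i) →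
      f R' < f R → f (R' + a) < f (R + a))
    (hIIAeq : ∀ R R' a : Fin s → ℝ, (∀ i, 0 ≤ R i) → (∀ i, 0 ≤ R' i) →
      (∀ i, 0 ≤ R i + a i) → (∀ i, 0 ≤ R' i + a i) →
      f R = f R' → f (R + a) = f (R' + a))
    (R a : Fin s → ℝ) (hR : ∀ i, 0 ≤ R i) (hRa : ∀ i, 0 ≤ R i + a i)
    (hfa : f R = f (R + a)) :
    ∀ q : ℚ, 0 ≤ q → (∀ i, 0 ≤ R i + (q : ℝ) * a i) →
      f R = f (R + (q : ℝ) • a) := by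
  intro q hq hq2
  set n : ℕ := q.den with hn
  set m : ℕ := q.num.toNat with hm
  have hnpos : 0 < (n : ℝ) := by exact_mod_cast q.pos
  have hmq : (m : ℝ) / (n : ℝ) = (q : ℝ) := by
    rw [Rat.cast_def]
    congr 1
    have hnum : (0:ℤ) ≤ q.num := Rat.num_nonneg.mpr hq
    rw [hm]
    exact_mod_cast congrArg (Int.cast : ℤ → ℝ) (Int.toNat_of_nonneg hnum)
  -- segment nonnegativity
  have hseg : ∀ t : ℝ, 0 ≤ t → t ≤ max 1 (q:ℝ) → ∀ i, 0 ≤ R i + t * a i := by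
    intro t ht hT i
    rcases le_or_gt 0 (a i) with h | h
    · nlinarith [hR i]
    · have h1 : max 1 (q:ℝ) * a i ≤ t * a i := mul_le_mul_of_nonpos_right hT h.le
      rcases max_cases 1 (q:ℝ) with ⟨he, _⟩ | ⟨he, _⟩
      · have := hRa i; nlinarith
      · have := hq2 i; nlinarith
  set N : ℕ := max n m with hN
  set P : ℕ → (Fin s → ℝ) := fun k => R + ((k : ℝ) / n) • a with hPdef
  have hP : ∀ k : ℕ, k ≤ N → ∀ i, 0 ≤ P k i := by
    intro k hk i
    have h1 : (0:ℝ) ≤ (k:ℝ)/n := by positivity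
    have h2 : (k:ℝ)/n ≤ max 1 (q:ℝ) := by
      have hkN : (k:ℝ) ≤ (N:ℝ) := by exact_mod_cast hk
      have hstep1 : (k:ℝ)/n ≤ (N:ℝ)/n := by gcongr
      have hstep2 : (N:ℝ)/n = max 1 (q:ℝ) := by
        rw [hN, Nat.cast_max, ← max_div_div_right hnpos.le, div_self hnpos.ne', hmq]
      rw [hstep2] at hstep1
      exact hstep1
    simpa [hPdef] using hseg _ h1 h2 i
  have hstep : ∀ k : ℕ, P k + ((n:ℝ))⁻¹ • a = P (k+1) := by
    intro k
    funext i
    simp only [hPdef, Pi.add_apply, Pi.smul_apply, smul_eq_mul]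
    push_cast
    field_simp
    ring
  have hP0 : P 0 = R := by
    funext i; simp [hPdef]
  have hPn : P n = R + a := by
    funext i
    simp only [hPdef, Pi.add_apply, Pi.smul_apply, smul_eq_mul]
    rw [div_self hnpos.ne']
    ring
  have hPm : P m = R + (q:ℝ) • a := by
    funext i
    simp only [hPdef, Pi.add_apply, Pi.smul_apply, smul_eq_mul, hmq]
  have hnN : n ≤ N := le_max_left _ _
  have hmN : m ≤ N := le_max_right _ _
  have hn1 : 1 ≤ n := q.pos
  have hPstep_nonneg : ∀ k : ℕ, k + 1 ≤ N → ∀ i, 0 ≤ P k i + ((n:ℝ)⁻¹ • a) i := by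
    intro k hk i
    have h' := hP (k+1) hk i
    rw [← hstep k] at h'
    exact h'
  -- trichotomy: f (P 0) = f (P 1)
  have key : f (P 0) = f (P 1) := by
    rcases lt_trichotomy (f (P 0)) (f (P 1)) with hlt | heq | hgt
    · exfalso
      have chain : ∀ k, k + 1 ≤ n → f (P k) < f (P (k+1)) := by
        intro k
        induction k with
        | zero => intro _; exact hlt
        | succ k ih =>
          intro hk
          have h := hIIAlt (P (k+1)) (P k) ((n:ℝ)⁻¹ • a)
            (hP (k+1) (by omega)) (hP k (by omega))
            (hPstep_nonneg (k+1) (by omega)) (hPstep_nonneg k (by omega))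
            (ih (by omega))
          rwa [hstep, hstep] at h
      have hc := chain_lt' (fun k => f (P k)) n chain hn1
      simp only [hP0, hPn] at hc
      exact absurd hfa (ne_of_lt hc)
    · exact heq
    · exfalso
      have chain : ∀ k, k + 1 ≤ n → (fun j => -f (P j)) k < (fun j => -f (P j)) (k+1) := by
        intro k
        induction k with
        | zero => intro _; simpa using hgt
        | succ k ih =>
          intro hk
          simp only [neg_lt_neg_iff]
          have hprev : f (P (k+1)) < f (P k) := by
            have := ih (by omega); simpa using this
          have h := hIIAlt (P k) (P (k+1)) ((n:ℝ)⁻¹ • a)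
            (hP k (by omega)) (hP (k+1) (by omega))
            (hPstep_nonneg k (by omega)) (hPstep_nonneg (k+1) (by omega))
            hprev
          rwa [hstep, hstep] at h
      have hc := chain_lt' (fun k => -f (P k)) n chain hn1
      simp only [hP0, hPn, neg_lt_neg_iff] at hc
      exact absurd hfa (ne_of_gt hc)
  have h1 : R + (n:ℝ)⁻¹ • a = P 1 := by rw [← hstep 0, hP0]
  have hbase : f R = f (R + (n:ℝ)⁻¹ • a) := by
    rw [h1, ← hP0]; exact key
  -- equality chain up to N
  have chain : ∀ k, k + 1 ≤ N → f (P k) = f (P (k+1)) := by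
    intro k hk
    have h2 : (R + (n:ℝ)⁻¹ • a + (((k:ℝ))/n) • a) = P (k+1) := by
      rw [← hstep k]
      funext i; simp only [hPdef, Pi.add_apply, Pi.smul_apply, smul_eq_mul]; ring
    have h := hIIAeq R (R + (n:ℝ)⁻¹ • a) (((k:ℝ)/n) • a)
      hR
      (by rw [h1]; exact hP 1 (by omega))
      (hP k (by omega))
      (by intro i
          have h' := hP (k+1) (by omega) i
          rw [← h2] at h'
          exact h')
      hbase
    rw [h2] at h
    exact h
  have hc := chain_eq' (fun k => f (P k)) N chain m hmN
  simp only [hP0, hPm] at hc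
  exact hc
end

section
/- Let D ⊆ ℝⁿ be convex, S a finite set of scenarios, and for each i ∈ S let f_i : D → ℝ be quasiconvex. Assume that for every subset K ⊆ S the minimax problem min_{x∈D} max_{i∈K} f_i(x) has a unique minimizer x*(K). Then there exists a subset K ⊆ S with |K| ≤ n + 1 such that x*(K) = x*(S). -/
/-- Lemma 3 (reduced scenarios): for quasiconvex costs on a convex decision set `D ⊆ ℝⁿ`,
if every minimax subproblem has a unique minimizer, then some subset of at most `n + 1`
scenarios already determines the full minimax solution. -/
theorem stmt4 {n : ℕ} {S : Type*} [Fintype S] [Nonempty S]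
    (D : Set (Fin n → ℝ)) (hD : Convex ℝ D)
    (f : S → (Fin n → ℝ) → ℝ)
    (hqc : ∀ (i : S) (z : ℝ), Convex ℝ {x ∈ D | f i x ≤ z})
    (xstar : Finset S → (Fin n → ℝ))
    (hmin : ∀ (K : Finset S) (hK : K.Nonempty),
      xstar K ∈ D ∧
      (∀ y ∈ D, K.sup' hK (fun i => f i (xstar K)) ≤ K.sup' hK (fun i => f i y)) ∧
      (∀ x ∈ D, (∀ y ∈ D, K.sup' hK (fun i => f i x) ≤ K.sup' hK (fun i => f i y)) →
        x = xstar K)) :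
    ∃ K : Finset S, K.Nonempty ∧ K.card ≤ n + 1 ∧ xstar K = xstar Finset.univ := by
  classical
  have hU : (Finset.univ : Finset S).Nonempty := Finset.univ_nonempty
  obtain ⟨hx₀D, hopt, _⟩ := hmin Finset.univ hU
  set x₀ := xstar Finset.univ with hx₀
  set v : ℝ := Finset.univ.sup' hU (fun i => f i x₀) with hv
  -- strict sublevel sets at level v
  set H : S → Set (Fin n → ℝ) := fun i => {y ∈ D | f i y < v} with hH
  have hHconv : ∀ i, Convex ℝ (H i) := by
    intro i a ha b hb s t hs ht hst
    obtain ⟨haD, haf⟩ := ha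
    obtain ⟨hbD, hbf⟩ := hb
    have hz : Convex ℝ {x ∈ D | f i x ≤ max (f i a) (f i b)} := hqc i _
    have := hz ⟨haD, le_max_left _ _⟩ ⟨hbD, le_max_right _ _⟩ hs ht hst
    exact ⟨this.1, lt_of_le_of_lt this.2 (max_lt haf hbf)⟩
  -- the intersection over all of S is empty
  have hempty : (⋂ i ∈ (Finset.univ : Finset S), H i) = ∅ := by
    by_contra h
    obtain ⟨y, hy⟩ := Set.nonempty_iff_ne_empty.mpr h
    simp only [Set.mem_iInter] at hy
    have hyD : y ∈ D := (hy (Classical.arbitrary S) (Finset.mem_univ _)).1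
    have hlt : Finset.univ.sup' hU (fun i => f i y) < v := by
      apply Finset.sup'_lt_iff hU |>.mpr
      intro i hi
      exact (hy i hi).2
    exact absurd (hopt y hyD) (not_le.mpr hlt)
  -- contrapositive of Helly's theorem: some small subfamily has empty intersection
  have hdim : Module.finrank ℝ (Fin n → ℝ) = n := by simp
  by_contra hcon
  push_neg at hcon
  have hinter : ∀ I ⊆ (Finset.univ : Finset S),
      I.card ≤ Module.finrank ℝ (Fin n → ℝ) + 1 → (⋂ i ∈ I, H i).Nonempty := by
    intro I _ hIcard
    rw [hdim] at hIcard
    rcases I.eq_empty_or_nonempty with rfl | hIne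
    · simp
    -- if empty, then x₀ would be optimal for I, hence xstar I = x₀, contradicting hcon
    by_contra hIempty
    rw [Set.not_nonempty_iff_eq_empty] at hIempty
    obtain ⟨hxID, hoptI, huniqI⟩ := hmin I hIne
    have hx₀opt : ∀ y ∈ D, I.sup' hIne (fun i => f i x₀) ≤ I.sup' hIne (fun i => f i y) := by
      intro y hyD
      have h1 : I.sup' hIne (fun i => f i x₀) ≤ v := by
        apply Finset.sup'_le
        intro i hi
        exact Finset.le_sup' (fun i => f i x₀) (Finset.mem_univ i)
      have h2 : v ≤ I.sup' hIne (fun i => f i y) := by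
        -- y is not in ⋂ i ∈ I, H i, so some i ∈ I has f i y ≥ v
        have : y ∉ (⋂ i ∈ I, H i) := by rw [hIempty]; exact Set.notMem_empty y
        simp only [Set.mem_iInter, not_forall] at this
        obtain ⟨i, hiI, hiH⟩ := this
        have : ¬ f i y < v := fun h => hiH ⟨hyD, h⟩
        exact le_trans (not_lt.mp this) (Finset.le_sup' (fun i => f i y) hiI)
      linarith
    have := huniqI x₀ hx₀D hx₀opt
    exact hcon I hIne hIcard this.symm
  have := Convex.helly_theorem' (𝕜 := ℝ) (F := H) (s := Finset.univ)
    (fun i _ => hHconv i) hinter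
  rw [hempty] at this
  exact Set.not_nonempty_empty this
end

section
/- Let g_j(x) = max over feasible probability vectors p (satisfying A_j p ≤ 0, Σ_{i∈S_j} p_i = 1, p ≥ 0) of Σ_{i∈S_j} p_i f_i(x), where each f_i : D → ℝ is strictly convex on a convex set D ⊆ ℝⁿ. Then g_j is strictly convex on D. -/
/-- Strict convexity of the worst-case expected cost `g_j` over a nonempty compact set of
probability vectors cut out by linear constraints, when each cost `f i` is strictly convex. -/
theorem stmt5 {n m : ℕ} {S : Type*} [Fintype S]
    (D : Set (Fin n → ℝ)) (hD : Convex ℝ D)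
    (f : S → (Fin n → ℝ) → ℝ)
    (hf : ∀ i, StrictConvexOn ℝ D (f i))
    (A : Fin m → S → ℝ)
    (P : Set (S → ℝ))
    (hP : P = {p | (∀ t, ∑ i, A t i * p i ≤ 0) ∧ (∑ i, p i) = 1 ∧ ∀ i, 0 ≤ p i})
    (hPne : P.Nonempty) (hPc : IsCompact P) :
    StrictConvexOn ℝ D (fun x => sSup ((fun p : S → ℝ => ∑ i, p i * f i x) '' P)) := by
  have hcont : ∀ z : Fin n → ℝ, Continuous (fun p : S → ℝ => ∑ i, p i * f i z) := fun z =>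
    continuous_finset_sum _ fun i _ => (continuous_apply i).mul continuous_const
  have hbdd : ∀ z, BddAbove ((fun p : S → ℝ => ∑ i, p i * f i z) '' P) := fun z =>
    (hPc.image (hcont z)).bddAbove
  refine ⟨hD, ?_⟩
  intro x hx y hy hxy a b ha hb hab
  set z := a • x + b • y with hz
  obtain ⟨p, hpP, hpmax⟩ := hPc.exists_isMaxOn hPne (hcont z).continuousOn
  have hpP' := hpP
  rw [hP] at hpP'
  obtain ⟨-, hsum, hnn⟩ := hpP'
  -- sup at z equals value at p
  have hgz : sSup ((fun p : S → ℝ => ∑ i, p i * f i z) '' P) = ∑ i, p i * f i z := by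
    apply le_antisymm
    · apply csSup_le (hPne.image _)
      rintro v ⟨q, hq, rfl⟩
      exact hpmax hq
    · exact le_csSup (hbdd z) ⟨p, hpP, rfl⟩
  -- some coordinate is positive
  have hex : ∃ i0, 0 < p i0 := by
    by_contra h
    push_neg at h
    have : ∑ i, p i = 0 := Finset.sum_eq_zero fun i _ => le_antisymm (h i) (hnn i)
    simp [this] at hsum
  obtain ⟨i0, hi0⟩ := hex
  have hstrict : ∑ i, p i * f i z < ∑ i, p i * (a * f i x + b * f i y) := by
    apply Finset.sum_lt_sum
    · intro i _
      have := ((hf i).convexOn).2 hx hy ha.le hb.le hab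
      simpa [smul_eq_mul] using mul_le_mul_of_nonneg_left this (hnn i)
    · refine ⟨i0, Finset.mem_univ _, ?_⟩
      have := (hf i0).2 hx hy hxy ha hb hab
      simpa [smul_eq_mul] using mul_lt_mul_of_pos_left this hi0
  have hsplit : ∑ i, p i * (a * f i x + b * f i y)
      = a * ∑ i, p i * f i x + b * ∑ i, p i * f i y := by
    rw [Finset.mul_sum, Finset.mul_sum, ← Finset.sum_add_distrib]
    congr 1; ext i; ring
  have hlex : ∑ i, p i * f i x ≤ sSup ((fun p : S → ℝ => ∑ i, p i * f i x) '' P) :=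
    le_csSup (hbdd x) ⟨p, hpP, rfl⟩
  have hley : ∑ i, p i * f i y ≤ sSup ((fun p : S → ℝ => ∑ i, p i * f i y) '' P) :=
    le_csSup (hbdd y) ⟨p, hpP, rfl⟩
  calc sSup ((fun p : S → ℝ => ∑ i, p i * f i z) '' P)
      = ∑ i, p i * f i z := hgz
    _ < a * ∑ i, p i * f i x + b * ∑ i, p i * f i y := by rw [← hsplit]; exact hstrict
    _ ≤ a • sSup ((fun p : S → ℝ => ∑ i, p i * f i x) '' P)
        + b • sSup ((fun p : S → ℝ => ∑ i, p i * f i y) '' P) := by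
        simp only [smul_eq_mul]
        exact add_le_add (mul_le_mul_of_nonneg_left hlex ha.le)
          (mul_le_mul_of_nonneg_left hley hb.le)
end

section
/- Let S be a finite scenario set, each scenario i associated with a vector a^(i) ∈ ℝⁿ, and suppose costs are f_i(x) = h(x − a^(i)) + kᵀx for a quasiconvex function h : ℝⁿ → ℝ and fixed k ∈ ℝⁿ. If for some scenario j there exist λ_i ≥ 0 with Σ_{i∈S_j} λ_i = 1 (j ∉ S_j ⊆ S) and a^(j) = Σ_{i∈S_j} λ_i a^(i), then max_{i∈S} f_i(x) = max_{i∈S∖{j}} f_i(x) for all x, so scenario j can be removed without affecting the minimax cost problem. -/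
/-!
Since `h` is quasiconvex and `x - a j = ∑ λ_i (x - a i)` is a convex combination, `h (x - a j)`
is at most `h (x - a i)` for some `i ∈ S_j`. The linear term `kᵀx` does not depend on the
scenario, so `f j x ≤ f i x` with `i ≠ j`, and scenario `j` never attains the maximum alone.
-/

open Finset

theorem QuasiconvexOn.exists_le_of_sum_smul {𝕜 E β ι : Type*} [Field 𝕜] [LinearOrder 𝕜]
    [IsStrictOrderedRing 𝕜] [AddCommGroup E] [Module 𝕜 E] [LinearOrder β]
    {s : Set E} {f : E → β} (hf : QuasiconvexOn 𝕜 s f) {t : Finset ι} {w : ι → 𝕜} {p : ι → E}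
    (hw₀ : ∀ i ∈ t, 0 ≤ w i) (hw₁ : ∑ i ∈ t, w i = 1) (hp : ∀ i ∈ t, p i ∈ s) :
    ∃ i ∈ t, f (∑ i ∈ t, w i • p i) ≤ f (p i) := by
  have ht : t.Nonempty := nonempty_of_sum_ne_zero (hw₁ ▸ one_ne_zero)
  obtain ⟨i, hi, hmax⟩ := t.exists_max_image (f ∘ p) ht
  have hmem : ∑ k ∈ t, w k • p k ∈ {x ∈ s | f x ≤ f (p i)} :=
    (hf (f (p i))).sum_mem hw₀ hw₁ fun k hk => ⟨hp k hk, hmax k hk⟩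
  exact ⟨i, hi, hmem.2⟩

theorem Finset.sup'_erase_eq_of_le {α β : Type*} [DecidableEq α] [SemilatticeSup β]
    {s : Finset α} {f : α → β} {i j : α} (hi : i ∈ s) (hij : i ≠ j) (hle : f j ≤ f i)
    (H : (s.erase j).Nonempty) :
    (s.erase j).sup' H f = s.sup' (H.mono (erase_subset j s)) f := by
  refine le_antisymm (sup'_mono f (erase_subset j s) H) (sup'_le _ _ fun k hk => ?_)
  rcases eq_or_ne k j with rfl | hkj
  · exact hle.trans (le_sup' f (mem_erase.2 ⟨hij, hi⟩))
  · exact le_sup' f (mem_erase.2 ⟨hkj, hk⟩)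

theorem Finset.sum_smul_sub_eq_sub_sum_smul {ι R M : Type*} [Ring R] [AddCommGroup M]
    [Module R M] {t : Finset ι} {w : ι → R} (hw : ∑ i ∈ t, w i = 1) (x : M) (p : ι → M) :
    ∑ i ∈ t, w i • (x - p i) = x - ∑ i ∈ t, w i • p i := by
  simp only [smul_sub, sum_sub_distrib, ← sum_smul, hw, one_smul]

/-- Lemma 5 (cost part): if `a j` is a convex combination of the other mean-demand vectors
and costs are `f i x = h (x - a i) + kᵀx` with `h` quasiconvex, then scenario `j` is redundant
for the minimax cost problem: the pointwise maximum is unchanged when `j` is removed. -/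
theorem stmt7 {n : ℕ} {S : Type*} [Fintype S] [Nonempty S] [DecidableEq S]
    (a : S → (Fin n → ℝ)) (h : (Fin n → ℝ) → ℝ) (k : Fin n → ℝ)
    (hq : ∀ z : ℝ, Convex ℝ {y : Fin n → ℝ | h y ≤ z})
    (f : S → (Fin n → ℝ) → ℝ)
    (hfdef : ∀ i x, f i x = h (x - a i) + ∑ t, k t * x t)
    (j : S) (Sj : Finset S) (hjSj : j ∉ Sj) (hSj : Sj.Nonempty)
    (lam : S → ℝ) (hlam : ∀ i ∈ Sj, 0 ≤ lam i) (hsum : ∑ i ∈ Sj, lam i = 1)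
    (haj : a j = ∑ i ∈ Sj, lam i • a i) :
    ∀ x : Fin n → ℝ,
      Finset.univ.sup' Finset.univ_nonempty (fun i => f i x) =
      (Finset.univ.erase j).sup'
        (hSj.imp fun i hi =>
          Finset.mem_erase.mpr ⟨fun hij => hjSj (hij ▸ hi), Finset.mem_univ i⟩)
        (fun i => f i x) := by
  intro x
  obtain ⟨i, hi, hle⟩ := (convex_univ.quasiconvexOn_of_convex_le hq).exists_le_of_sum_smul
    hlam hsum (p := fun i => x - a i) fun _ _ => Set.mem_univ _
  rw [sum_smul_sub_eq_sub_sum_smul hsum, ← haj] at hle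
  have hfle : f j x ≤ f i x := by
    rw [hfdef, hfdef]
    exact add_le_add_left hle _
  exact (sup'_erase_eq_of_le (mem_univ i) (ne_of_mem_of_not_mem hi hjSj) hfle _).symm
end

section
/- There exists a 3-decision, 3-scenario cost matrix such that the minimax cost (equivalently minimax regret) choice cannot be realized as a minimum-expected-cost choice under any probability distribution over scenarios. Concretely, for decisions {x,y,z} and scenarios {A,B,C} with costs C_A = (4,0,5), C_B = (3,5,0), C_C = (3,2,0) (in order x,y,z), the minimax choice is x, but there is no probability vector (p_A,p_B,p_C) ≥ 0 summing to 1 with p_A·4 + p_B·3 + p_C·3 ≤ p_A·0 + p_B·5 + p_C·2 and p_A·4 + p_B·3 + p_C·3 ≤ p_A·5 + p_B·0 + p_C·0. -/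
/-- Example 1: the minimax choice `x` (decision `0`) cannot be realized as a
minimum-expected-cost choice under any probability distribution over the three scenarios.
Rows of `C` are scenarios A, B, C; columns are decisions x, y, z. -/
theorem stmt9 :
    ∀ C : Fin 3 → Fin 3 → ℝ, C = ![![4, 0, 5], ![3, 5, 0], ![3, 2, 0]] →
      (∀ d : Fin 3, d ≠ 0 →
        Finset.univ.sup' Finset.univ_nonempty (fun i => C i 0) <
        Finset.univ.sup' Finset.univ_nonempty (fun i => C i d)) ∧
      ¬ ∃ p : Fin 3 → ℝ, (∀ i, 0 ≤ p i) ∧ (∑ i, p i = 1) ∧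
          (p 0 * 4 + p 1 * 3 + p 2 * 3 ≤ p 0 * 0 + p 1 * 5 + p 2 * 2) ∧
          (p 0 * 4 + p 1 * 3 + p 2 * 3 ≤ p 0 * 5 + p 1 * 0 + p 2 * 0) := by
  intro C hC
  subst hC
  constructor
  · intro d hd
    fin_cases d
    · exact absurd rfl hd
    all_goals
      simp [show (Finset.univ : Finset (Fin 3)) = {0,1,2} from rfl, Finset.sup'_insert]
      norm_num [max_def, Matrix.vecHead, Matrix.vecTail]
  · rintro ⟨p, hpos, hsum, h1, h2⟩
    have h0 := hpos 0
    have h1' := hpos 1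
    have h2' := hpos 2
    rw [Fin.sum_univ_three] at hsum
    linarith
end

section
/- With two equally likely scenarios and three decisions whose six costs C_i(x), C_i(y), C_i(z) (i = 1,2) are independent uniform random variables on [0,1], the expected average cost (over the two scenarios) of the decision chosen by the minimax cost rule equals 12/35. -/
/-!
Almost surely the six costs are distinct, so the minimax decision is unique and the expected
average cost splits into a sum over decisions `d` of `E[avg d; max d < max e for all e ≠ d]`.
Conditionally on the two costs `(a, b)` of `d`, the other two decisions are independent and each
has a larger maximal cost with probability `1 - max(a, b)²`. Hence every decision contributes
`∫∫ (a + b) / 2 * (1 - max(a, b)²)² da db = 4 / 35`.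
-/

open MeasureTheory Set

theorem MeasureTheory.measurePreserving_curry {ι κ X : Type*} [Fintype ι] [Fintype κ]
    [MeasurableSpace X] (μ : Measure X) [IsProbabilityMeasure μ] :
    MeasurePreserving (MeasurableEquiv.curry ι κ X) (Measure.pi fun _ => μ)
      (Measure.pi fun _ => Measure.pi fun _ => μ) := by
  refine ⟨MeasurableEquiv.measurable _, ?_⟩
  simpa only [Measure.infinitePi_eq_pi] using
    Measure.infinitePi_map_curry (fun (_ : ι) (_ : κ) => μ)

theorem MeasureTheory.measurePreserving_arrowCongr'_prodComm {ι κ X : Type*} [Fintype ι]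
    [Fintype κ] [MeasurableSpace X] (μ : Measure X) [SigmaFinite μ] :
    MeasurePreserving (MeasurableEquiv.arrowCongr' (Equiv.prodComm ι κ) (.refl X))
      (Measure.pi fun _ => μ) (Measure.pi fun _ => μ) := by
  convert measurePreserving_piCongrLeft (fun _ => μ) (Equiv.prodComm ι κ)
  ext g p
  simp [MeasurableEquiv.arrowCongr', Equiv.arrowCongr', Equiv.arrowCongr,
    MeasurableEquiv.coe_piCongrLeft, Equiv.piCongrLeft_apply_eq_cast]

/-- Currying in the second variable: `ω ↦ fun k i => ω (i, k)`. -/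
def MeasurableEquiv.currySwap (ι κ X : Type*) [MeasurableSpace X] :
    (ι × κ → X) ≃ᵐ (κ → ι → X) :=
  (MeasurableEquiv.arrowCongr' (Equiv.prodComm ι κ) (.refl X)).trans
    (MeasurableEquiv.curry κ ι X)

theorem MeasureTheory.measurePreserving_currySwap {ι κ X : Type*} [Fintype ι] [Fintype κ]
    [MeasurableSpace X] (μ : Measure X) [IsProbabilityMeasure μ] :
    MeasurePreserving (MeasurableEquiv.currySwap ι κ X) (Measure.pi fun _ => μ)
      (Measure.pi fun _ => Measure.pi fun _ => μ) :=
  (measurePreserving_curry μ).comp (measurePreserving_arrowCongr'_prodComm μ)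

theorem MeasureTheory.volume_restrict_setOf_forall_mem {ι X : Type*} [Fintype ι] [MeasureSpace X]
    [SigmaFinite (volume : Measure X)] (s : Set X) :
    (volume : Measure (ι → X)).restrict {ω | ∀ p, ω p ∈ s} =
      Measure.pi fun _ => volume.restrict s := by
  rw [← Measure.restrict_pi_pi, volume_pi]
  congr 1
  ext ω
  simp

section StrictArgmin

open scoped Classical

theorem sInf_value_at_argmin_eq_sum {ι : Type*} [Fintype ι] [Nonempty ι] {c v : ι → ℝ}
    (hc : Function.Injective c) :
    sInf {w | ∃ d, (∀ d', c d ≤ c d') ∧ w = v d} =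
      ∑ d, if ∀ e ≠ d, c d < c e then v d else 0 := by
  obtain ⟨d₀, hd₀⟩ := Finite.exists_min c
  have hlt : ∀ e ≠ d₀, c d₀ < c e := fun e he => (hd₀ e).lt_of_ne (hc.ne he.symm)
  have hargmin : {w | ∃ d, (∀ d', c d ≤ c d') ∧ w = v d} = {v d₀} := by
    ext w
    refine ⟨?_, fun hw => ⟨d₀, hd₀, hw⟩⟩
    rintro ⟨d, hd, rfl⟩
    rw [hc ((hd d₀).antisymm (hd₀ d))]
    rfl
  rw [hargmin, csInf_singleton, Finset.sum_eq_single d₀ (fun d _ hd => if_neg ?_) (by simp),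
    if_pos hlt]
  exact fun h => (h d₀ hd.symm).not_gt (hlt d hd)

variable {α : Type*} [MeasurableSpace α] (ρ : Measure α) [IsProbabilityMeasure ρ] {n : ℕ}
  {s f : α → ℝ}

theorem integrable_pi_ite_forall_lt (hs : Measurable s) (hf : Integrable f ρ)
    (i : Fin (n + 1)) :
    Integrable (fun x => if ∀ j ≠ i, s (x i) < s (x j) then f (x i) else 0)
      (Measure.pi fun _ => ρ) := by
  have hS : MeasurableSet {x : Fin (n + 1) → α | ∀ j ≠ i, s (x i) < s (x j)} := by
    simp only [ofPred_forall]
    exact .iInter fun j => .iInter fun _ =>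
      measurableSet_lt (hs.comp (measurable_pi_apply i)) (hs.comp (measurable_pi_apply j))
  refine (((measurePreserving_eval (fun _ => ρ) i).integrable_comp_of_integrable hf).indicator
    hS).congr (.of_forall fun x => ?_)
  simp only [indicator_apply, mem_ofPred_eq, Function.comp_apply, Function.eval]

theorem integral_pi_ite_forall_lt (hs : Measurable s) (hf : Integrable f ρ)
    (i : Fin (n + 1)) :
    ∫ x, (if ∀ j ≠ i, s (x i) < s (x j) then f (x i) else 0) ∂(Measure.pi fun _ => ρ) =
      ∫ a, f a * ρ.real {b | s a < s b} ^ n ∂ρ := by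
  set e := MeasurableEquiv.piFinSuccAbove (fun _ : Fin (n + 1) => α) i
  have he := measurePreserving_piFinSuccAbove (fun _ => ρ) i
  let G : α × (Fin n → α) → ℝ := fun p =>
    f p.1 * ∏ k, {b | s p.1 < s b}.indicator 1 (p.2 k)
  have hG : G ∘ e = fun x => if ∀ j ≠ i, s (x i) < s (x j) then f (x i) else 0 := by
    funext x
    simp only [G, e, Function.comp_apply, MeasurableEquiv.piFinSuccAbove_apply,
      Fin.insertNthEquiv_symm_apply, indicator_apply, mem_ofPred_eq, Pi.one_apply,
      Finset.prod_boole]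
    rw [mul_ite, mul_one, mul_zero]
    refine if_congr ⟨fun h j hj => ?_, fun h k _ => h _ (Fin.succAbove_ne i k)⟩ rfl rfl
    obtain ⟨k, rfl⟩ := Fin.exists_succAbove_eq hj
    exact h k (Finset.mem_univ k)
  have hGint : Integrable G (ρ.prod (Measure.pi fun _ => ρ)) := by
    rw [← he.integrable_comp_emb e.measurableEmbedding, hG]
    exact integrable_pi_ite_forall_lt ρ hs hf i
  rw [← hG]
  refine (he.integral_comp' (f := e) G).trans ?_
  rw [integral_prod G hGint]
  refine integral_congr_ae (.of_forall fun a => ?_)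
  simp only [G]
  rw [integral_const_mul, integral_fintype_prod_eq_pow,
    integral_indicator_one (measurableSet_lt measurable_const hs), Fintype.card_fin]

theorem measure_pi_setOf_eq_eq_zero (hs : Measurable s) (hatom : ∀ m, ρ {b | s b = m} = 0)
    {i j : Fin (n + 1)} (hij : j ≠ i) :
    Measure.pi (fun _ => ρ) {x | s (x i) = s (x j)} = 0 := by
  obtain ⟨k, rfl⟩ := Fin.exists_succAbove_eq hij
  have he := measurePreserving_piFinSuccAbove (fun _ => ρ) i
  have hS : MeasurableSet {p : α × (Fin n → α) | s p.1 = s (p.2 k)} :=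
    measurableSet_eq_fun (hs.comp measurable_fst)
      (hs.comp ((measurable_pi_apply k).comp measurable_snd))
  change Measure.pi (fun _ => ρ) (MeasurableEquiv.piFinSuccAbove (fun _ => α) i ⁻¹'
    {p : α × (Fin n → α) | s p.1 = s (p.2 k)}) = 0
  rw [he.measure_preimage hS.nullMeasurableSet, Measure.measure_prod_null hS]
  refine .of_forall fun a => ?_
  have hsec : Prod.mk a ⁻¹' {p : α × (Fin n → α) | s p.1 = s (p.2 k)} =
      Function.eval k ⁻¹' {b | s b = s a} := by
    ext y
    exact eq_comm
  change Measure.pi _ _ = 0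
  rw [hsec]
  exact Measure.pi_eval_preimage_null _ (hatom (s a))

theorem ae_injective_comp_pi (hs : Measurable s) (hatom : ∀ m, ρ {b | s b = m} = 0) :
    ∀ᵐ x ∂(Measure.pi fun _ : Fin (n + 1) => ρ), Function.Injective (s ∘ x) := by
  have hpair : ∀ i j : Fin (n + 1),
      ∀ᵐ x ∂(Measure.pi fun _ => ρ), s (x i) = s (x j) → i = j := by
    intro i j
    by_cases hij : j = i
    · exact .of_forall fun _ _ => hij.symm
    · refine measure_mono_null (fun x hx => ?_) (measure_pi_setOf_eq_eq_zero ρ hs hatom hij)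
      by_contra h
      exact hx fun hxij => absurd hxij h
  filter_upwards [ae_all_iff.2 fun i => ae_all_iff.2 (hpair i)] with x hx i j
  exact hx i j

theorem integral_pi_sInf_value_at_argmin (hs : Measurable s) (hatom : ∀ m, ρ {b | s b = m} = 0)
    (hf : Integrable f ρ) :
    ∫ x, sInf {v | ∃ d, (∀ d', s (x d) ≤ s (x d')) ∧ v = f (x d)}
        ∂(Measure.pi fun _ : Fin (n + 1) => ρ) =
      (n + 1) * ∫ a, f a * ρ.real {b | s a < s b} ^ n ∂ρ := by
  calc _ = ∫ x, ∑ d, (if ∀ e ≠ d, s (x d) < s (x e) then f (x d) else 0)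
          ∂(Measure.pi fun _ : Fin (n + 1) => ρ) := by
        refine integral_congr_ae ?_
        filter_upwards [ae_injective_comp_pi ρ hs hatom] with x hx
        convert sInf_value_at_argmin_eq_sum (c := fun d => s (x d)) (v := fun d => f (x d)) hx
    _ = ∑ _d : Fin (n + 1), ∫ a, f a * ρ.real {b | s a < s b} ^ n ∂ρ := by
        rw [integral_finsetSum _ fun d _ => integrable_pi_ite_forall_lt ρ hs hf d]
        exact Finset.sum_congr rfl fun d _ => integral_pi_ite_forall_lt ρ hs hf d
    _ = _ := by simp

end StrictArgmin

section UniformCosts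

local notation "ν" => volume.restrict (Icc (0 : ℝ) 1)

instance isProbabilityMeasure_restrict_Icc_zero_one : IsProbabilityMeasure ν := ⟨by simp⟩

theorem measureReal_lt_max_pi_restrict_Icc {m : ℝ} (hm : m ∈ Icc (0 : ℝ) 1) :
    (Measure.pi fun _ : Fin 2 => ν).real {b | m < max (b 0) (b 1)} = 1 - m ^ 2 := by
  have hset : {b : Fin 2 → ℝ | m < max (b 0) (b 1)} = (univ.pi fun _ => Iic m)ᶜ := by
    ext b
    simp only [mem_ofPred_eq, mem_compl_iff, mem_pi, mem_univ, true_implies, mem_Iic,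
      Fin.forall_fin_two, not_and_or, not_le, lt_max_iff]
  have hIic : (ν).real (Iic m) = m := by
    have : Iic m ∩ Icc 0 1 = Icc 0 m := by
      ext x
      simp only [mem_inter_iff, mem_Iic, mem_Icc]
      grind
    rw [measureReal_restrict_apply measurableSet_Iic, this, Real.volume_real_Icc_of_le hm.1,
      sub_zero]
  rw [hset, probReal_compl_eq_one_sub (.univ_pi fun _ => measurableSet_Iic), measureReal_def,
    Measure.pi_pi, Finset.prod_const, Finset.card_univ, Fintype.card_fin, ENNReal.toReal_pow,
    ← measureReal_def, hIic]

theorem measure_max_eq_pi_restrict_Icc (m : ℝ) :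
    (Measure.pi fun _ : Fin 2 => ν) {b | max (b 0) (b 1) = m} = 0 := by
  refine measure_mono_null (fun b hb => ?_)
    (measure_union_null (Measure.pi_hyperplane _ 0 m) (Measure.pi_hyperplane _ 1 m))
  rcases max_choice (b 0) (b 1) with h | h <;> simp_all

theorem integrable_avg_pi_restrict_Icc :
    Integrable (fun b : Fin 2 → ℝ => (b 0 + b 1) / 2) (Measure.pi fun _ => ν) := by
  have hid : Integrable id ν := continuous_id.integrableOn_Icc
  refine (Integrable.add ?_ ?_).div_const 2 <;>
    exact (measurePreserving_eval (fun _ => ν) _).integrable_comp_of_integrable hid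

theorem integral_avg_mul_one_sub_max_sq_sq {a : ℝ} (ha : a ∈ Icc (0 : ℝ) 1) :
    ∫ b in (0 : ℝ)..1, (a + b) / 2 * (1 - max a b ^ 2) ^ 2 =
      1 / 12 + a * (4 / 15) - 11 / 12 * a ^ 4 + 17 / 30 * a ^ 6 := by
  have hF : Continuous fun b : ℝ => (a + b) / 2 * (1 - max a b ^ 2) ^ 2 := by fun_prop
  rw [← intervalIntegral.integral_add_adjacent_intervals (b := a) (hF.intervalIntegrable _ _)
    (hF.intervalIntegrable _ _)]
  -- Linear terms are written `b * c`: `c * b` would be eta-reduced to `(c * ·)`, which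
  -- `integral_const_mul` does not match.
  have hlow : ∫ b in (0 : ℝ)..a, (a + b) / 2 * (1 - max a b ^ 2) ^ 2 =
      ∫ b in (0 : ℝ)..a, (1 - a ^ 2) ^ 2 / 2 * a + b * ((1 - a ^ 2) ^ 2 / 2) := by
    refine intervalIntegral.integral_congr fun b hb => ?_
    rw [uIcc_of_le ha.1] at hb
    simp only [max_eq_left hb.2]
    ring
  have hhigh : ∫ b in a..1, (a + b) / 2 * (1 - max a b ^ 2) ^ 2 =
      ∫ b in a..1, a / 2 + b / 2 - a * b ^ 2 - b ^ 3 + a / 2 * b ^ 4 + 1 / 2 * b ^ 5 := by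
    refine intervalIntegral.integral_congr fun b hb => ?_
    rw [uIcc_of_le ha.2] at hb
    simp only [max_eq_right hb.1]
    ring
  rw [hlow, hhigh]
  simp (disch := exact Continuous.intervalIntegrable (by fun_prop) _ _) only [integral_pow,
    intervalIntegral.integral_add, intervalIntegral.integral_sub, intervalIntegral.integral_div,
    intervalIntegral.integral_const_mul, intervalIntegral.integral_mul_const,
    intervalIntegral.integral_const, integral_id, smul_eq_mul]
  ring

theorem integral_avg_mul_measureReal_lt_max_sq :
    ∫ a, (a 0 + a 1) / 2 *
        (Measure.pi fun _ : Fin 2 => ν).real {b | max (a 0) (a 1) < max (b 0) (b 1)} ^ 2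
      ∂(Measure.pi fun _ : Fin 2 => ν) = 4 / 35 := by
  have hunit : ∀ᵐ a ∂(Measure.pi fun _ : Fin 2 => ν), ∀ i, a i ∈ Icc (0 : ℝ) 1 :=
    ae_all_iff.2 fun _ => Measure.tendsto_eval_ae_ae.eventually (ae_restrict_mem measurableSet_Icc)
  let F : ℝ → ℝ → ℝ := fun a b => (a + b) / 2 * (1 - max a b ^ 2) ^ 2
  have hF : Integrable (Function.uncurry F) ((ν).prod ν) := by
    rw [Measure.prod_restrict, ← Measure.volume_eq_prod]
    exact ContinuousOn.integrableOn_compact (isCompact_Icc.prod isCompact_Icc)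
      (Continuous.continuousOn (by fun_prop))
  calc _ = ∫ a, F (a 0) (a 1) ∂(Measure.pi fun _ : Fin 2 => ν) := by
        refine integral_congr_ae (hunit.mono fun a ha => ?_)
        dsimp only
        rw [measureReal_lt_max_pi_restrict_Icc
          ⟨le_max_of_le_left (ha 0).1, max_le (ha 0).2 (ha 1).2⟩]
    _ = ∫ p, Function.uncurry F p ∂((ν).prod ν) :=
        (measurePreserving_finTwoArrow ν).integral_comp' (Function.uncurry F)
    _ = ∫ a in (0 : ℝ)..1, 1 / 12 + a * (4 / 15) - 11 / 12 * a ^ 4 + 17 / 30 * a ^ 6 := by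
        rw [integral_prod _ hF, intervalIntegral.integral_of_le zero_le_one,
          ← integral_Icc_eq_integral_Ioc]
        refine setIntegral_congr_fun measurableSet_Icc fun a ha => ?_
        rw [integral_Icc_eq_integral_Ioc, ← intervalIntegral.integral_of_le zero_le_one]
        exact integral_avg_mul_one_sub_max_sq_sq ha
    _ = 4 / 35 := by
        simp (disch := exact Continuous.intervalIntegrable (by fun_prop) _ _) only [integral_pow,
          intervalIntegral.integral_add, intervalIntegral.integral_sub,
          intervalIntegral.integral_const_mul, intervalIntegral.integral_mul_const,
          intervalIntegral.integral_const, integral_id, smul_eq_mul]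
        norm_num

end UniformCosts

/-- With two equally likely scenarios and three decisions whose six costs `ω (i, d)` are
i.i.d. Uniform[0,1] (modelled by Lebesgue measure restricted to the unit cube in
`Fin 2 × Fin 3 → ℝ`), the expected average cost of the minimax-cost decision equals `12/35`.
(The minimax decision is a.s. unique; on ties the infimum over tied decisions is taken.) -/
theorem stmt14 :
    ∫ ω : Fin 2 × Fin 3 → ℝ,
        sInf {v : ℝ | ∃ d : Fin 3,
          (∀ d' : Fin 3, max (ω (0, d)) (ω (1, d)) ≤ max (ω (0, d')) (ω (1, d'))) ∧
          v = (ω (0, d) + ω (1, d)) / 2}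
      ∂(volume.restrict {ω : Fin 2 × Fin 3 → ℝ | ∀ p, ω p ∈ Set.Icc (0 : ℝ) 1}) =
    12 / 35 := by
  rw [volume_restrict_setOf_forall_mem]
  calc _ = ∫ x, sInf {v | ∃ d, (∀ d', max (x d 0) (x d 1) ≤ max (x d' 0) (x d' 1)) ∧
            v = (x d 0 + x d 1) / 2}
          ∂(Measure.pi fun _ : Fin 3 =>
            Measure.pi fun _ : Fin 2 => volume.restrict (Icc (0 : ℝ) 1)) :=
        (measurePreserving_currySwap _).integral_comp' _
    _ = 12 / 35 := by
        rw [integral_pi_sInf_value_at_argmin _ (by fun_prop) measure_max_eq_pi_restrict_Icc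
          integrable_avg_pi_restrict_Icc, integral_avg_mul_measureReal_lt_max_sq]
        norm_num
end
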